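/- arXiv:2603.16698 — 4 statements merged into one kernel-verified Lean document; each statement's English description precedes it below -/
import Mathlib

section
/- Let (a_1, …, a_l) be a strictly increasing sequence in [2n] that is not symplectic. Then there exists a unique index i ∈ [2, l] such that a_i < 2i−1 and a_k ≥ 2k−1 for all k < i; moreover for this i, a_{i−1} = 2i−3 and a_i = 2i−2. -/
/-- If a strictly increasing sequence `(a_1, …, a_l)` in `[2n]` is not symplectic, there is a
unique index `i ∈ [2, l]` with `a_i < 2i−1` and `a_k ≥ 2k−1` for all `k < i`; moreover for this
`i` one has `a_{i−1} = 2i−3` and `a_i = 2i−2`. -/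
theorem stmt_5 (n l : ℕ) (a : ℕ → ℕ) (hl : 1 ≤ l)
    (hinc : ∀ i j, 1 ≤ i → i < j → j ≤ l → a i < a j)
    (hbound : ∀ i, 1 ≤ i → i ≤ l → 1 ≤ a i ∧ a i ≤ 2 * n)
    (hns : ∃ i, 1 ≤ i ∧ i ≤ l ∧ a i < 2 * i - 1) :
    (∃! i, 2 ≤ i ∧ i ≤ l ∧ a i < 2 * i - 1 ∧ ∀ k, 1 ≤ k → k < i → 2 * k - 1 ≤ a k) ∧
    (∀ i, (2 ≤ i ∧ i ≤ l ∧ a i < 2 * i - 1 ∧ ∀ k, 1 ≤ k → k < i → 2 * k - 1 ≤ a k) →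
      a (i - 1) = 2 * i - 3 ∧ a i = 2 * i - 2) := by
  have key : ∀ i, (2 ≤ i ∧ i ≤ l ∧ a i < 2 * i - 1 ∧ ∀ k, 1 ≤ k → k < i → 2 * k - 1 ≤ a k) →
      a (i - 1) = 2 * i - 3 ∧ a i = 2 * i - 2 := by
    rintro i ⟨h2, hil, hlt, hmin⟩
    have h1 : 1 ≤ i - 1 := by omega
    have hprev : 2 * (i - 1) - 1 ≤ a (i - 1) := hmin (i - 1) h1 (by omega)
    have hinc' : a (i - 1) < a i := hinc (i - 1) i h1 (by omega) hil
    constructor <;> omega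
  refine ⟨?_, key⟩
  classical
  have hex : ∃ i, 1 ≤ i ∧ i ≤ l ∧ a i < 2 * i - 1 := hns
  set m := Nat.find hex with hmdef
  have hm := Nat.find_spec hex
  rw [← hmdef] at hm
  have hm2 : 2 ≤ m := by
    rcases Nat.lt_or_ge m 2 with h | h
    · exfalso
      have h1 : m = 1 := by omega
      rw [h1] at hm
      have := (hbound 1 le_rfl hl).1
      have := hm.2.2
      omega
    · exact h
  have hmin : ∀ k, 1 ≤ k → k < m → 2 * k - 1 ≤ a k := by
    intro k hk1 hkm
    by_contra h
    exact Nat.find_min hex hkm ⟨hk1, by omega, by omega⟩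
  refine ⟨m, ⟨hm2, hm.2.1, hm.2.2, hmin⟩, ?_⟩
  rintro j ⟨hj2, hjl, hjlt, hjmin⟩
  by_contra hne
  rcases Nat.lt_or_ge j m with h | h
  · have := hmin j (by omega) h; omega
  · have := hjmin m (by omega) (by omega)
    have := hm.2.2
    omega
end

section
/- Let a = (a_1,…,a_l) be a strictly increasing sequence in [2n] with l ≤ 2n. Then rem(a) = a (every entry is removable) if and only if l is even and a_i = i for all i, i.e., a = (1, 2, …, l). -/
/-!
Writing `a = b ++ [p, q]`, `rem a` has length at most `|a| - 1` unless the last pair is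
appended, so `rem a = a` forces `rem b = b`, `p + 1 = q` and `q ≤ |b| + 2`. By induction
`b = (1, …, |b|)` with `|b|` even, and since `a` is increasing with positive entries, `p ≥ |b| + 1`;
hence `(p, q) = (|b| + 1, |b| + 2)`. Conversely the pair `(2k + 1, 2k + 2)` always passes the test.
-/

/-- The removal subword `rem a` of a column `a = (a_1, …, a_l)` (written 0-indexed as a
list): `rem a = []` if `l ≤ 1`; if `l ≥ 2`, `a_l` is even, `a_{l-1} = a_l − 1` and
`a_l < 2l − |rem (a_1,…,a_{l-2})| − 1`, then `rem a = rem (a_1,…,a_{l-2}) ++ [a_{l-1}, a_l]`;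
otherwise `rem a = rem (a_1,…,a_{l-1})`. -/
def rem (a : List ℕ) : List ℕ :=
  if a.length ≤ 1 then []
  else
    if a.getLast! % 2 = 0 ∧ a.dropLast.getLast! + 1 = a.getLast! ∧
        a.getLast! + (rem a.dropLast.dropLast).length + 1 < 2 * a.length then
      rem a.dropLast.dropLast ++ [a.dropLast.getLast!, a.getLast!]
    else
      rem a.dropLast
termination_by a.length
decreasing_by
  all_goals (simp [List.length_dropLast]; omega)

theorem rem_append_pair (b : List ℕ) (p q : ℕ) :
    rem (b ++ [p, q]) =
      if q % 2 = 0 ∧ p + 1 = q ∧ q + (rem b).length + 1 < 2 * (b.length + 2) then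
        rem b ++ [p, q]
      else rem (b ++ [p]) := by
  rw [rem, if_neg (by simp)]
  have hq : b ++ [p, q] = (b ++ [p]) ++ [q] := by simp
  simp only [hq, List.dropLast_concat, List.length_append, List.length_singleton,
    List.getLast!_eq_getLast?_getD, List.getLast?_concat, Option.getD_some]

theorem rem_length_le (a : List ℕ) : (rem a).length ≤ a.length := by
  rw [rem]
  split_ifs
  · simp
  · have := rem_length_le a.dropLast.dropLast
    simp only [List.length_append, List.length_dropLast, List.length_cons,
      List.length_nil] at *
    omega
  · have := rem_length_le a.dropLast
    simp only [List.length_dropLast] at this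
    omega
termination_by a.length
decreasing_by all_goals (simp [List.length_dropLast]; omega)

theorem List.exists_eq_append_pair {α : Type*} {a : List α} (h : 2 ≤ a.length) :
    ∃ b p q, a = b ++ [p, q] := by
  obtain ⟨b, p, q, hr⟩ : ∃ q p b, a.reverse = q :: p :: b := by
    have hl : 2 ≤ a.reverse.length := by simpa using h
    match a.reverse, hl with
    | q :: p :: b, _ => exact ⟨q, p, b, rfl⟩
  exact ⟨q.reverse, p, b, by simpa using congrArg List.reverse hr⟩

theorem range'_one_add_two (m : ℕ) :
    List.range' 1 (m + 2) = List.range' 1 m ++ [m + 1, m + 2] := by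
  rw [← List.range'_append_1]
  simp only [List.range', Nat.add_comm 1 m]

theorem rem_range'_of_even {m : ℕ} (hm : Even m) : rem (List.range' 1 m) = List.range' 1 m := by
  obtain ⟨k, rfl⟩ := hm
  induction k with
  | zero => simp [rem]
  | succ k ih =>
    rw [show k + 1 + (k + 1) = k + k + 2 by omega, range'_one_add_two, rem_append_pair, ih,
      if_pos ⟨by omega, rfl, by simp only [List.length_range']; omega⟩]

theorem rem_eq_self_of_append_pair {b : List ℕ} {p q : ℕ} (h : rem (b ++ [p, q]) = b ++ [p, q]) :
    rem b = b ∧ p + 1 = q ∧ q + b.length + 1 < 2 * (b.length + 2) := by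
  rw [rem_append_pair] at h
  split_ifs at h with hcond
  · have hb : rem b = b := List.append_cancel_right h
    exact ⟨hb, hcond.2.1, by simpa only [hb] using hcond.2.2⟩
  · have := rem_length_le (b ++ [p])
    have := congrArg List.length h
    simp only [List.length_append, List.length_cons, List.length_nil] at *
    omega

theorem eq_range'_of_rem_eq_self {a : List ℕ} (hsorted : a.Pairwise (· < ·))
    (hpos : ∀ x ∈ a, 1 ≤ x) (h : rem a = a) : Even a.length ∧ a = List.range' 1 a.length := by
  induction hl : a.length using Nat.strong_induction_on generalizing a with
  | _ l ih =>
  subst hl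
  by_cases hshort : a.length ≤ 1
  · rw [rem, if_pos hshort] at h
    simp [← h]
  obtain ⟨b, p, q, rfl⟩ := List.exists_eq_append_pair (a := a) (by omega)
  obtain ⟨hb, hpq, hq⟩ := rem_eq_self_of_append_pair h
  have hsorted' := List.pairwise_append.1 hsorted
  obtain ⟨hbeven, hbrange⟩ := ih b.length (by simp) hsorted'.1
    (fun x hx => hpos x (by simp [hx])) hb rfl
  have hp : b.length + 1 ≤ p := by
    rcases Nat.eq_zero_or_pos b.length with h0 | h0
    · have := hpos p (by simp); omega
    · have hmem : b.length ∈ List.range' 1 b.length := List.mem_range'_1.2 ⟨h0, by omega⟩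
      rw [← hbrange] at hmem
      exact hsorted'.2.2 _ hmem p (by simp)
  obtain rfl : p = b.length + 1 := by omega
  obtain rfl : q = b.length + 2 := by omega
  refine ⟨by simpa using hbeven.add even_two, ?_⟩
  simp only [List.length_append, List.length_cons, List.length_nil, range'_one_add_two]
  rw [← hbrange]

theorem stmt_11_general (n : ℕ) (a : List ℕ) (hsorted : a.Pairwise (· < ·))
    (hbound : ∀ x ∈ a, 1 ≤ x ∧ x ≤ 2 * n) :
    rem a = a ↔ (Even a.length ∧ a = List.range' 1 a.length) := by
  refine ⟨eq_range'_of_rem_eq_self hsorted fun x hx => (hbound x hx).1, ?_⟩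
  rintro ⟨heven, hrange⟩
  rw [hrange]
  exact rem_range'_of_even heven

/-- For a strictly increasing sequence `a` in `[2n]` of length `l ≤ 2n`,
`rem a = a` iff `l` is even and `a = (1, 2, …, l)`. -/
theorem stmt_11 (n : ℕ) (a : List ℕ) (hsorted : a.Pairwise (· < ·))
    (hbound : ∀ x ∈ a, 1 ≤ x ∧ x ≤ 2 * n) (hlen : a.length ≤ 2 * n) :
    rem a = a ↔ (Even a.length ∧ a = List.range' 1 a.length) :=
  stmt_11_general n a hsorted hbound
end

section
/- Let Q be a tableau in Rec-tilde of shape λ/μ (satisfying (R1)–(R5)). Then for each k > 0, the condition Q[k] ≥ 2(ℓ(μ^{(k−1)}) − n) implies Q_{≤ i}[k] ≥ 2(i − n) for all 1 ≤ i ≤ ℓ(μ^{(k−1)}). -/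
/-!
The rows of `μ^{(k-1)}` form an initial segment `{1, …, ℓ}` of the positive integers, because
`λ` and `μ` are partitions and columns of `Q` weakly decrease. By (R1) each row contains the
value `k` at most once, so the rows `i + 1, …, ℓ` carry at most `ℓ - i` copies of `k`, giving
`Q[k] ≤ Q_{≤i}[k] + ℓ - i`. Combined with `2ℓ ≤ Q[k] + 2n` and `i ≤ ℓ` this yields
`2i ≤ Q_{≤i}[k] + 2n`.
-/

/-- `cellOf lam mu i j` : `(i,j)` (matrix coordinates, indexed from 1) is a cell of the
skew shape `λ/μ`. -/
def cellOf (lam mu : ℕ → ℕ) (i j : ℕ) : Prop := 1 ≤ i ∧ mu i < j ∧ j ≤ lam i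

/-- `Qcount lam mu Q k = Q[k]` : the number of occurrences of the value `k` in `Q`. -/
noncomputable def Qcount (lam mu : ℕ → ℕ) (Q : ℕ → ℕ → ℕ) (k : ℕ) : ℕ :=
  Nat.card {p : ℕ × ℕ | cellOf lam mu p.1 p.2 ∧ Q p.1 p.2 = k}

/-- `Qle lam mu Q r k = Q_{≤r}[k]` : the number of occurrences of `k` in rows `1,…,r`. -/
noncomputable def Qle (lam mu : ℕ → ℕ) (Q : ℕ → ℕ → ℕ) (r k : ℕ) : ℕ :=
  Nat.card {p : ℕ × ℕ | cellOf lam mu p.1 p.2 ∧ p.1 ≤ r ∧ Q p.1 p.2 = k}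

/-- `lenStage lam mu Q k = ℓ(μ^{(k-1)})` : the number of nonempty rows of the shape
`D(μ) ∪ {(i,j) ∈ D(λ/μ) : Q(i,j) ≥ k}`. -/
noncomputable def lenStage (lam mu : ℕ → ℕ) (Q : ℕ → ℕ → ℕ) (k : ℕ) : ℕ :=
  Nat.card {i : ℕ | 1 ≤ i ∧ (1 ≤ mu i ∨ ∃ j, cellOf lam mu i j ∧ k ≤ Q i j)}

/-- `IsRecTilde n lam mu Q` : `Q` is a tableau of shape `λ/μ` in the set `Rec-tilde`,
i.e. a filling of the skew cells by positive integers (zero outside) satisfying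
(R1) entries strictly decrease along rows left to right;
(R2) entries weakly decrease down columns;
(R3) each value `k ≥ 1` occurs an even number of times;
(R4) `Q[k] ≥ 2(ℓ(μ^{(k-1)}) − n)` for each `k ≥ 1`;
(R5) `Q_{≤r}[k+1] ≤ Q_{≤r}[k]` for all `r, k ≥ 1`. -/
def IsRecTilde (n : ℕ) (lam mu : ℕ → ℕ) (Q : ℕ → ℕ → ℕ) : Prop :=
  (∀ i j, ¬ cellOf lam mu i j → Q i j = 0) ∧
  (∀ i j, cellOf lam mu i j → 1 ≤ Q i j) ∧
  (∀ i j j', cellOf lam mu i j → cellOf lam mu i j' → j < j' → Q i j' < Q i j) ∧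
  (∀ i j, cellOf lam mu i j → cellOf lam mu (i + 1) j → Q (i + 1) j ≤ Q i j) ∧
  (∀ k, 1 ≤ k → Even (Qcount lam mu Q k)) ∧
  (∀ k, 1 ≤ k → 2 * lenStage lam mu Q k ≤ Qcount lam mu Q k + 2 * n) ∧
  (∀ r k, 1 ≤ k → Qle lam mu Q r (k + 1) ≤ Qle lam mu Q r k)

open Set

theorem Set.Icc_one_ncard_subset {S : Set ℕ} (hpos : ∀ r ∈ S, 1 ≤ r)
    (hstep : ∀ r, 1 ≤ r → r + 1 ∈ S → r ∈ S) : Icc 1 S.ncard ⊆ S := by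
  have hdown : ∀ r x, 1 ≤ r → r ≤ x → x ∈ S → r ∈ S := by
    intro r x hr hrx
    induction x, hrx using Nat.le_induction with
    | base => exact id
    | succ x hrx ih => exact fun hx => ih (hstep x (hr.trans hrx) hx)
  rintro r ⟨hr1, hrS⟩
  by_contra hr
  have hsub : S ⊆ Ico 1 r := fun x hx =>
    ⟨hpos x hx, lt_of_not_ge fun hrx => hr (hdown r x hr1 hrx hx)⟩
  have := ncard_le_ncard hsub (finite_Ico 1 r)
  rw [ncard_Ico_nat] at this
  omega

theorem Set.ncard_add_ncard_le_ncard_inter_preimage_add {α β : Type*} {f : α → β} {A : Set α}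
    {S T : Set β} (hf : InjOn f A) (hAS : MapsTo f A S) (hTS : T ⊆ S) (hS : S.Finite) :
    A.ncard + T.ncard ≤ (A ∩ f ⁻¹' T).ncard + S.ncard := by
  have hA : A.Finite := Finite.of_finite_image (hS.subset (image_subset_iff.2 hAS)) hf
  have hout : (A \ f ⁻¹' T).ncard ≤ (S \ T).ncard :=
    ncard_le_ncard_of_injOn f (fun _ hp => ⟨hAS hp.1, hp.2⟩) (hf.mono sdiff_subset) hS.sdiff
  have hsplitA := ncard_inter_add_ncard_sdiff_eq_ncard A (f ⁻¹' T) hA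
  have hsplitS := ncard_sdiff_add_ncard_of_subset hTS hS
  omega

section Tableau

variable (lam mu : ℕ → ℕ) (Q : ℕ → ℕ → ℕ) (k : ℕ)

def stageRows : Set ℕ := {i | 1 ≤ i ∧ (1 ≤ mu i ∨ ∃ j, cellOf lam mu i j ∧ k ≤ Q i j)}

def cellsWith : Set (ℕ × ℕ) := {p | cellOf lam mu p.1 p.2 ∧ Q p.1 p.2 = k}

theorem lenStage_eq_ncard : lenStage lam mu Q k = (stageRows lam mu Q k).ncard :=
  Nat.card_coe_set_eq _

theorem Qcount_eq_ncard : Qcount lam mu Q k = (cellsWith lam mu Q k).ncard :=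
  Nat.card_coe_set_eq _

theorem Qle_eq_ncard (r : ℕ) :
    Qle lam mu Q r k = (cellsWith lam mu Q k ∩ Prod.fst ⁻¹' Icc 1 r).ncard := by
  rw [Qle, Nat.card_coe_set_eq]
  congr 1
  ext p
  simp only [cellsWith, cellOf, mem_ofPred_eq, mem_inter_iff, mem_preimage, mem_Icc]
  tauto

theorem mapsTo_fst_cellsWith : MapsTo Prod.fst (cellsWith lam mu Q k) (stageRows lam mu Q k) :=
  fun p ⟨hp, hQp⟩ => ⟨hp.1, Or.inr ⟨p.2, hp, hQp.ge⟩⟩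

variable {lam mu Q}

theorem injOn_fst_cellsWith
    (hrow : ∀ i j j', cellOf lam mu i j → cellOf lam mu i j' → j < j' → Q i j' < Q i j) :
    InjOn Prod.fst (cellsWith lam mu Q k) := by
  rintro ⟨i, j⟩ ⟨hp, hQp⟩ ⟨i', j'⟩ ⟨hq, hQq⟩ (rfl : i = i')
  dsimp only at hp hQp hq hQq
  rcases lt_trichotomy j j' with h | rfl | h
  · exact absurd (hrow i j j' hp hq h) (by omega)
  · rfl
  · exact absurd (hrow i j' j hq hp h) (by omega)

theorem mem_stageRows_of_succ_mem (hlam : ∀ r, 1 ≤ r → lam (r + 1) ≤ lam r)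
    (hmu : ∀ r, 1 ≤ r → mu (r + 1) ≤ mu r)
    (hcol : ∀ i j, cellOf lam mu i j → cellOf lam mu (i + 1) j → Q (i + 1) j ≤ Q i j)
    {r : ℕ} (hr : 1 ≤ r) (hsucc : r + 1 ∈ stageRows lam mu Q k) : r ∈ stageRows lam mu Q k := by
  refine ⟨hr, ?_⟩
  obtain ⟨-, hmu1 | ⟨j, hcell, hkQ⟩⟩ := hsucc
  · exact Or.inl (hmu1.trans (hmu r hr))
  by_cases hj : j ≤ mu r
  · exact Or.inl (by have := hcell.2.1; omega)
  have hcell' : cellOf lam mu r j := ⟨hr, by omega, hcell.2.2.trans (hlam r hr)⟩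
  exact Or.inr ⟨j, hcell', hkQ.trans (hcol r j hcell' hcell)⟩

end Tableau

theorem stmt_17_general (n : ℕ) (lam mu : ℕ → ℕ) (Q : ℕ → ℕ → ℕ)
    (hlam : ∀ i j, 1 ≤ i → i ≤ j → lam j ≤ lam i)
    (hmu : ∀ i j, 1 ≤ i → i ≤ j → mu j ≤ mu i)
    (hQ : IsRecTilde n lam mu Q) :
    ∀ k, 1 ≤ k →
      (2 * lenStage lam mu Q k ≤ Qcount lam mu Q k + 2 * n) →
      ∀ i, 1 ≤ i → i ≤ lenStage lam mu Q k →
        2 * i ≤ Qle lam mu Q i k + 2 * n := by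
  obtain ⟨-, -, hrow, hcol, -⟩ := hQ
  intro k _ hR4 i hi hil
  rw [lenStage_eq_ncard] at hR4 hil
  rw [Qcount_eq_ncard] at hR4
  rw [Qle_eq_ncard]
  have hrows : Icc 1 i ⊆ stageRows lam mu Q k :=
    (Icc_subset_Icc_right hil).trans <| Icc_one_ncard_subset (fun _ hr => hr.1) fun r hr =>
      mem_stageRows_of_succ_mem k (fun r hr => hlam r (r + 1) hr r.le_succ)
        (fun r hr => hmu r (r + 1) hr r.le_succ) hcol hr
  have hcount := ncard_add_ncard_le_ncard_inter_preimage_add (injOn_fst_cellsWith k hrow)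
    (mapsTo_fst_cellsWith lam mu Q k) hrows (finite_of_ncard_pos (by omega))
  rw [ncard_Icc_nat] at hcount
  omega

/-- For `Q ∈ Rec-tilde(λ/μ)` and each `k > 0`, the condition (R4)
`Q[k] ≥ 2(ℓ(μ^{(k-1)}) − n)` implies `Q_{≤i}[k] ≥ 2(i − n)` for all
`1 ≤ i ≤ ℓ(μ^{(k-1)})` (both inequalities stated additively in ℕ). -/
theorem stmt_17 (n : ℕ) (lam mu : ℕ → ℕ) (Q : ℕ → ℕ → ℕ)
    (hlam : ∀ i j, 1 ≤ i → i ≤ j → lam j ≤ lam i)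
    (hlam2n : ∀ i, 2 * n < i → lam i = 0)
    (hmu : ∀ i j, 1 ≤ i → i ≤ j → mu j ≤ mu i)
    (hmun : ∀ i, n < i → mu i = 0)
    (hsub : ∀ i, mu i ≤ lam i)
    (hQ : IsRecTilde n lam mu Q) :
    ∀ k, 1 ≤ k →
      (2 * lenStage lam mu Q k ≤ Qcount lam mu Q k + 2 * n) →
      ∀ i, 1 ≤ i → i ≤ lenStage lam mu Q k →
        2 * i ≤ Qle lam mu Q i k + 2 * n :=
  stmt_17_general n lam mu Q hlam hmu hQ
end

section
/- Let λ, μ be partitions with μ ⊆ λ and λ/μ a single column shape (λ = (1^l), μ = (1^k)). The set of Rec-tilde tableaux of shape (1^l)/(1^k) on alphabet determined by n is nonempty if and only if k ≤ l, l − k is even, and l + k ≤ 2n; and in that case it contains exactly one element, the filling of the l − k cells all with entry 1. -/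
/-- `col m` is the column partition `(1^m)`. -/
def col (m : ℕ) : ℕ → ℕ := fun i => if i ≤ m then 1 else 0

lemma cell_iff (l k i j : ℕ) : cellOf (col l) (col k) i j ↔ k < i ∧ i ≤ l ∧ j = 1 := by
  unfold cellOf col
  split_ifs <;> omega

lemma natcard_Ioc (a b : ℕ) : Nat.card (Set.Ioc a b) = b - a := by
  rw [← Finset.coe_Ioc, Nat.card_coe_set_eq, Set.ncard_coe_finset, Nat.card_Ioc]

lemma card_pairs (l k : ℕ) (P : ℕ × ℕ → Prop) (S : Set ℕ)
    (h : ∀ p : ℕ × ℕ, (cellOf (col l) (col k) p.1 p.2 ∧ P p) ↔ (p.1 ∈ S ∧ p.2 = 1)) :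
    Nat.card {p : ℕ × ℕ | cellOf (col l) (col k) p.1 p.2 ∧ P p} = Nat.card S := by
  have e : {p : ℕ × ℕ | cellOf (col l) (col k) p.1 p.2 ∧ P p}
      = (fun i => (i, 1)) '' S := by
    ext ⟨a, b⟩
    simp only [Set.mem_setOf_eq, Set.mem_image, h ⟨a, b⟩]
    constructor
    · rintro ⟨hS, rfl⟩; exact ⟨a, hS, rfl⟩
    · rintro ⟨i, hi, h'⟩
      rw [Prod.mk.injEq] at h'
      obtain ⟨rfl, h2⟩ := h'
      exact ⟨hi, h2.symm⟩
  rw [e, Nat.card_image_of_injective]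
  intro a b hab
  simpa using hab

lemma qcount_one (l k : ℕ) (Q : ℕ → ℕ → ℕ)
    (hQ1 : ∀ i j, cellOf (col l) (col k) i j → Q i j = 1) :
    Qcount (col l) (col k) Q 1 = l - k := by
  unfold Qcount
  rw [card_pairs l k _ (Set.Ioc k l), natcard_Ioc]
  intro p
  simp only [cell_iff, Set.mem_Ioc]
  constructor
  · rintro ⟨⟨h1, h2, h3⟩, _⟩; exact ⟨⟨h1, h2⟩, h3⟩
  · rintro ⟨⟨h1, h2⟩, h3⟩
    exact ⟨⟨h1, h2, h3⟩, hQ1 _ _ ((cell_iff l k p.1 p.2).2 ⟨h1, h2, h3⟩)⟩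

lemma qcount_ne (l k : ℕ) (Q : ℕ → ℕ → ℕ)
    (hQ1 : ∀ i j, cellOf (col l) (col k) i j → Q i j = 1) (v : ℕ) (hv : v ≠ 1) :
    Qcount (col l) (col k) Q v = 0 := by
  unfold Qcount
  rw [card_pairs l k _ ∅]
  · rw [Nat.card_coe_set_eq, Set.ncard_empty]
  · intro p
    simp only [Set.mem_empty_iff_false, false_and, iff_false, not_and]
    intro hc hq
    have := hQ1 _ _ hc
    omega

lemma qle_ge2 (l k : ℕ) (Q : ℕ → ℕ → ℕ)
    (hQ1 : ∀ i j, cellOf (col l) (col k) i j → Q i j = 1) (r v : ℕ) (hv : 2 ≤ v) :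
    Qle (col l) (col k) Q r v = 0 := by
  unfold Qle
  rw [card_pairs l k _ ∅]
  · rw [Nat.card_coe_set_eq, Set.ncard_empty]
  · intro p
    simp only [Set.mem_empty_iff_false, false_and, iff_false, not_and]
    intro hc _ hq
    have := hQ1 _ _ hc
    omega

lemma lenstage_one (l k : ℕ) (Q : ℕ → ℕ → ℕ) (hkl : k ≤ l)
    (hQ1 : ∀ i j, cellOf (col l) (col k) i j → Q i j = 1) :
    lenStage (col l) (col k) Q 1 = l := by
  unfold lenStage
  have e : {i : ℕ | 1 ≤ i ∧ (1 ≤ col k i ∨ ∃ j, cellOf (col l) (col k) i j ∧ 1 ≤ Q i j)}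
      = Set.Ioc 0 l := by
    ext i
    constructor
    · rintro ⟨h1, h2 | ⟨j, hc, _⟩⟩
      · have hik : i ≤ k := by by_contra hik; simp [col, hik] at h2
        exact Set.mem_Ioc.2 ⟨by omega, by omega⟩
      · obtain ⟨ha, hb, _⟩ := (cell_iff l k i j).1 hc
        exact Set.mem_Ioc.2 ⟨by omega, hb⟩
    · intro hi
      rw [Set.mem_Ioc] at hi
      refine ⟨by omega, ?_⟩
      by_cases hik : i ≤ k
      · left; simp [col, hik]
      · right
        have hc : cellOf (col l) (col k) i 1 := (cell_iff l k i 1).2 ⟨by omega, hi.2, rfl⟩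
        exact ⟨1, hc, by rw [hQ1 i 1 hc]⟩
  rw [e, natcard_Ioc]
  omega

lemma lenstage_ge2 (l k : ℕ) (Q : ℕ → ℕ → ℕ) (v : ℕ) (hv : 2 ≤ v)
    (hQ1 : ∀ i j, cellOf (col l) (col k) i j → Q i j = 1) :
    lenStage (col l) (col k) Q v = k := by
  unfold lenStage
  have e : {i : ℕ | 1 ≤ i ∧ (1 ≤ col k i ∨ ∃ j, cellOf (col l) (col k) i j ∧ v ≤ Q i j)}
      = Set.Ioc 0 k := by
    ext i
    constructor
    · rintro ⟨h1, h2 | ⟨j, hc, hq⟩⟩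
      · have hik : i ≤ k := by by_contra hik; simp [col, hik] at h2
        exact Set.mem_Ioc.2 ⟨by omega, hik⟩
      · rw [hQ1 _ _ hc] at hq; omega
    · intro hi
      rw [Set.mem_Ioc] at hi
      exact ⟨by omega, Or.inl (by simp [col, hi.2])⟩
  rw [e, natcard_Ioc]
  omega

lemma all_one (n l k : ℕ) (Q : ℕ → ℕ → ℕ) (h : IsRecTilde n (col l) (col k) Q) :
    ∀ i j, cellOf (col l) (col k) i j → Q i j = 1 := by
  obtain ⟨h0, h1, _, h2, _, _, h5⟩ := h
  have mono : ∀ i, k < i → ∀ i', i ≤ i' → i' ≤ l → Q i' 1 ≤ Q i 1 := by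
    intro i hi i' hii'
    induction i', hii' using Nat.le_induction with
    | base => intro _; exact le_rfl
    | succ m hm ih =>
      intro hml
      have hcm : cellOf (col l) (col k) m 1 := (cell_iff l k m 1).2 ⟨by omega, by omega, rfl⟩
      have hcm1 : cellOf (col l) (col k) (m + 1) 1 :=
        (cell_iff l k (m + 1) 1).2 ⟨by omega, by omega, rfl⟩
      exact le_trans (h2 m 1 hcm hcm1) (ih (by omega))
  intro i j hc
  obtain ⟨hki, hil, rfl⟩ := (cell_iff l k i j).1 hc
  by_contra hne
  have hQi : 2 ≤ Q i 1 := by have := h1 i 1 hc; omega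
  set r := Nat.findGreatest (fun m => 2 ≤ Q m 1) l with hr
  have hir : i ≤ r := Nat.le_findGreatest hil hQi
  have hrl : r ≤ l := Nat.findGreatest_le l
  have hr2 : 2 ≤ Q r 1 := Nat.findGreatest_spec (P := fun m => 2 ≤ Q m 1) hil hQi
  have hkr : k < r := lt_of_lt_of_le hki hir
  have hz : Qle (col l) (col k) Q r 1 = 0 := by
    unfold Qle
    have e : {p : ℕ × ℕ | cellOf (col l) (col k) p.1 p.2 ∧ p.1 ≤ r ∧ Q p.1 p.2 = 1} = ∅ := by
      ext p
      simp only [Set.mem_setOf_eq, Set.mem_empty_iff_false, iff_false]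
      rintro ⟨hc', hpr, hq⟩
      obtain ⟨h1', h2', h3'⟩ := (cell_iff l k p.1 p.2).1 hc'
      have := mono p.1 h1' r hpr hrl
      rw [h3'] at hq
      omega
    rw [e, Nat.card_coe_set_eq, Set.ncard_empty]
  have chain : ∀ d, Qle (col l) (col k) Q r (1 + d) ≤ Qle (col l) (col k) Q r 1 := by
    intro d
    induction d with
    | zero => exact le_rfl
    | succ d ih => exact le_trans (h5 r (1 + d) (by omega)) ih
  have hpos : 0 < Qle (col l) (col k) Q r (Q r 1) := by
    unfold Qle
    have hfin : {p : ℕ × ℕ | cellOf (col l) (col k) p.1 p.2 ∧ p.1 ≤ r ∧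
        Q p.1 p.2 = Q r 1}.Finite := by
      apply Set.Finite.subset ((Set.finite_Ioc k l).prod (Set.finite_singleton 1))
      rintro ⟨a, b⟩ ⟨hc', _, _⟩
      obtain ⟨ha, hb, rfl⟩ := (cell_iff l k a b).1 hc'
      exact ⟨⟨ha, hb⟩, rfl⟩
    have hne' : {p : ℕ × ℕ | cellOf (col l) (col k) p.1 p.2 ∧ p.1 ≤ r ∧
        Q p.1 p.2 = Q r 1}.Nonempty :=
      ⟨(r, 1), (cell_iff l k r 1).2 ⟨hkr, hrl, rfl⟩, le_rfl, rfl⟩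
    haveI := hfin.to_subtype
    haveI := hne'.to_subtype
    exact Nat.card_pos
  have hle0 : Qle (col l) (col k) Q r (Q r 1) ≤ 0 := by
    have h' := chain (Q r 1 - 1)
    have he : 1 + (Q r 1 - 1) = Q r 1 := by omega
    rw [he, hz] at h'
    exact h'
  omega

lemma isRec_of (n l k : ℕ) (hk : k ≤ n) (hkl : k ≤ l) (heven : Even (l - k))
    (hsum : l + k ≤ 2 * n) (Q : ℕ → ℕ → ℕ)
    (h0 : ∀ i j, ¬ cellOf (col l) (col k) i j → Q i j = 0)
    (hQ1 : ∀ i j, cellOf (col l) (col k) i j → Q i j = 1) :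
    IsRecTilde n (col l) (col k) Q := by
  refine ⟨h0, fun i j hc => (hQ1 i j hc).ge, ?_, ?_, ?_, ?_, ?_⟩
  · intro i j j' hc hc' hjj'
    obtain ⟨_, _, rfl⟩ := (cell_iff l k i j).1 hc
    obtain ⟨_, _, rfl⟩ := (cell_iff l k i j').1 hc'
    omega
  · intro i j hc hc'
    rw [hQ1 _ _ hc, hQ1 _ _ hc']
  · intro v hv
    rcases eq_or_ne v 1 with rfl | hne
    · rw [qcount_one l k Q hQ1]; exact heven
    · rw [qcount_ne l k Q hQ1 v hne]; exact Even.zero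
  · intro v hv
    rcases eq_or_ne v 1 with rfl | hne
    · rw [qcount_one l k Q hQ1, lenstage_one l k Q hkl hQ1]; omega
    · rw [lenstage_ge2 l k Q v (by omega) hQ1]; omega
  · intro r v hv
    rw [qle_ge2 l k Q hQ1 r (v + 1) (by omega)]
    exact Nat.zero_le _

/-- For the single-column skew shape `(1^l)/(1^k)` (with `k ≤ n`, `l ≤ 2n`):
the set of Rec-tilde tableaux of this shape is nonempty iff `k ≤ l`, `l − k` is even and
`l + k ≤ 2n`; and in that case every Rec-tilde tableau of this shape fills all cells
with the entry `1`, and such a filling exists. -/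
theorem stmt_18 (n l k : ℕ) (hk : k ≤ n) (hl : l ≤ 2 * n) :
    ((∃ Q, k ≤ l ∧ IsRecTilde n (col l) (col k) Q) ↔
      (k ≤ l ∧ Even (l - k) ∧ l + k ≤ 2 * n)) ∧
    ((k ≤ l ∧ Even (l - k) ∧ l + k ≤ 2 * n) →
      (∃ Q, IsRecTilde n (col l) (col k) Q ∧
        ∀ i j, cellOf (col l) (col k) i j → Q i j = 1) ∧
      ∀ Q, IsRecTilde n (col l) (col k) Q →
        ∀ i j, cellOf (col l) (col k) i j → Q i j = 1) := by
  constructor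
  · constructor
    · rintro ⟨Q, hkl, hQ⟩
      have hQ1 := all_one n l k Q hQ
      refine ⟨hkl, ?_, ?_⟩
      · have := hQ.2.2.2.2.1 1 le_rfl
        rwa [qcount_one l k Q hQ1] at this
      · have := hQ.2.2.2.2.2.1 1 le_rfl
        rw [qcount_one l k Q hQ1, lenstage_one l k Q hkl hQ1] at this
        omega
    · rintro ⟨hkl, heven, hsum⟩
      refine ⟨fun i j => if k < i ∧ i ≤ l ∧ j = 1 then 1 else 0, hkl, ?_⟩
      · exact isRec_of n l k hk hkl heven hsum _
          (fun i j h => if_neg (fun hc => h ((cell_iff l k i j).2 hc)))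
          (fun i j h => if_pos ((cell_iff l k i j).1 h))
  · rintro ⟨hkl, heven, hsum⟩
    refine ⟨⟨fun i j => if k < i ∧ i ≤ l ∧ j = 1 then 1 else 0, ?_, ?_⟩, ?_⟩
    · exact isRec_of n l k hk hkl heven hsum _
        (fun i j h => if_neg (fun hc => h ((cell_iff l k i j).2 hc)))
        (fun i j h => if_pos ((cell_iff l k i j).1 h))
    · intro i j h; exact if_pos ((cell_iff l k i j).1 h)
    · intro Q hQ; exact all_one n l k Q hQ
end
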